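/- arXiv:2310.20281 — 4 statements merged into one kernel-verified Lean document; each statement's English description precedes it below -/
import Mathlib

section
/- For every α ∈ (0,1), every K ≥ 1, every smooth compactly supported function φ : ℝ → ℝ with support contained in [-K, K], every λ ∈ {-1, 1}, and all real bounds B₁, B₂ with 0 < B₁ ≤ B₂ ≤ ∞ and L ≥ 1, one has |∫_{B₁}^{B₂} r^{-α} e^{iλr} φ(r/L) dr| ≤ C (B₁^{-α} ‖φ‖_∞ + K^{1-α} L^{-α} ‖φ'‖_∞) for a constant C depending only on α. -/
open MeasureTheory Real

noncomputable def supNorm (φ : ℝ → ℝ) : ℝ := ⨆ x, |φ x|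

/-!
The amplitude `r ↦ r ^ (-α) * φ (r / L)` vanishes for `r > K * L`, so the integral is an interval
integral over `[B₁, b]` with `b ≤ K * L`. Integrating by parts against
`e^{iλr} = (e^{iλr} / (iλ))'`, each boundary term is at most `B₁ ^ (-α) * ‖φ‖∞`, and the remaining
integral is bounded by the total variation of the amplitude:
`∫ α r ^ (-α - 1) ‖φ‖∞ ≤ B₁ ^ (-α) ‖φ‖∞` and
`∫₀^{KL} r ^ (-α) ‖φ'‖∞ / L ≤ (K L) ^ (1 - α) ‖φ'‖∞ / ((1 - α) L)
  = K ^ (1 - α) L ^ (-α) ‖φ'‖∞ / (1 - α)`.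
-/

open Set intervalIntegral Complex

theorem pos_of_mem_uIcc {a b x : ℝ} (ha : 0 < a) (hb : 0 < b) (hx : x ∈ uIcc a b) : 0 < x :=
  (lt_min ha hb).trans_le hx.1

theorem hasDerivAt_rpow_mul_comp_div {φ : ℝ → ℝ} (hφ : Differentiable ℝ φ) (p L : ℝ) {x : ℝ}
    (hx : 0 < x) :
    HasDerivAt (fun x ↦ x ^ p * φ (x / L))
      (p * x ^ (p - 1) * φ (x / L) + x ^ p * (deriv φ (x / L) / L)) x := by
  have hφL : HasDerivAt (fun x ↦ φ (x / L)) (deriv φ (x / L) * (1 / L)) x :=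
    (hφ (x / L)).hasDerivAt.comp x ((hasDerivAt_id x).div_const L)
  exact ((hasDerivAt_rpow_const (Or.inl hx.ne')).mul hφL).congr_deriv (by ring)

theorem mul_integral_rpow_neg_sub_one_le {α a b : ℝ} (hα : 0 < α) (ha : 0 < a) (hab : a ≤ b) :
    α * ∫ x in a..b, x ^ (-α - 1) ≤ a ^ (-α) := by
  have h0 : (0 : ℝ) ∉ uIcc a b := by
    rw [uIcc_of_le hab]; exact fun h ↦ ha.not_ge h.1
  rw [integral_rpow (Or.inr ⟨by linarith, h0⟩), sub_add_cancel, mul_div_assoc', div_neg,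
    mul_div_cancel_left₀ _ hα.ne']
  linarith [rpow_nonneg (ha.trans_le hab).le (-α)]

theorem mul_integral_rpow_neg_le {α a b : ℝ} (hα : α < 1) (ha : 0 ≤ a) :
    (1 - α) * ∫ x in a..b, x ^ (-α) ≤ b ^ (1 - α) := by
  rw [integral_rpow (Or.inl (by linarith)), neg_add_eq_sub, mul_div_cancel₀ _ (by linarith)]
  linarith [rpow_nonneg ha (1 - α)]

theorem norm_integral_ofReal_mul_cexp_le {u u' : ℝ → ℝ} {a b t : ℝ} (hab : a ≤ b) (ht : t ≠ 0)
    (hu : ∀ x ∈ uIcc a b, HasDerivAt u (u' x) x) (hu' : IntervalIntegrable u' volume a b) :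
    ‖∫ x in a..b, (u x : ℂ) * cexp (I * t * x)‖
      ≤ (|u a| + |u b| + ∫ x in a..b, |u' x|) / |t| := by
  set v : ℝ → ℂ := fun x ↦ cexp (I * t * x) / (I * t)
  have hIt : I * (t : ℂ) ≠ 0 := mul_ne_zero I_ne_zero (ofReal_ne_zero.mpr ht)
  have hv : ∀ x ∈ uIcc a b, HasDerivAt v (cexp (I * t * x)) x := fun x _ ↦
    (((hasDerivAt_id (x : ℂ)).const_mul (I * t)).cexp.comp_ofReal.div_const (I * t)).congr_deriv
      (by simp [mul_div_assoc, div_self hIt])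
  have hv_norm : ∀ x, ‖v x‖ = |t|⁻¹ := fun x ↦ by
    simp [v, norm_exp, mul_comm I, mul_assoc]
  have hibp := intervalIntegral.integral_mul_deriv_eq_deriv_mul
    (fun x hx ↦ (hu x hx).ofReal_comp) hv ⟨hu'.1.ofReal, hu'.2.ofReal⟩
    ((by fun_prop : Continuous fun x : ℝ ↦ cexp (I * t * x)).intervalIntegrable a b)
  have hrem : ‖∫ x in a..b, (u' x : ℂ) * v x‖ ≤ (∫ x in a..b, |u' x|) / |t| := by
    calc ‖∫ x in a..b, (u' x : ℂ) * v x‖ ≤ ∫ x in a..b, ‖(u' x : ℂ) * v x‖ :=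
          norm_integral_le_integral_norm hab
      _ = (∫ x in a..b, |u' x|) / |t| := by
          simp only [norm_mul, hv_norm, norm_real, Real.norm_eq_abs, ← div_eq_mul_inv,
            intervalIntegral.integral_div]
  rw [hibp]
  calc _ ≤ ‖(u b : ℂ) * v b‖ + ‖(u a : ℂ) * v a‖ + ‖∫ x in a..b, (u' x : ℂ) * v x‖ :=
        norm_sub_le_of_le (norm_sub_le _ _) le_rfl
    _ ≤ _ := by
        simp only [norm_mul, hv_norm, norm_real, Real.norm_eq_abs]
        rw [add_div, add_div, div_eq_mul_inv, div_eq_mul_inv]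
        linarith

theorem abs_rpow_neg_mul_le {α a x y M : ℝ} (hα : 0 ≤ α) (ha : 0 < a) (hax : a ≤ x)
    (hy : |y| ≤ M) :
    |x ^ (-α) * y| ≤ a ^ (-α) * M := by
  rw [abs_mul, abs_of_nonneg (rpow_nonneg (ha.trans_le hax).le _)]
  exact mul_le_mul (rpow_le_rpow_of_nonpos ha hax (neg_nonpos.mpr hα)) hy (abs_nonneg y)
    (rpow_nonneg ha.le _)

theorem integral_abs_deriv_rpow_mul_comp_div_le {φ : ℝ → ℝ} {α L M M' a b : ℝ} (hα0 : 0 < α)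
    (hα1 : α < 1) (hφ : ContDiff ℝ 1 φ) (hM : ∀ x, |φ x| ≤ M) (hM' : ∀ x, |deriv φ x| ≤ M')
    (hL : 0 < L) (ha : 0 < a) (hab : a ≤ b) :
    ∫ x in a..b, |-α * x ^ (-α - 1) * φ (x / L) + x ^ (-α) * (deriv φ (x / L) / L)|
      ≤ a ^ (-α) * M + b ^ (1 - α) * M' / ((1 - α) * L) := by
  have hM0 : 0 ≤ M := (abs_nonneg _).trans (hM 0)
  have hM'0 : 0 ≤ M' := (abs_nonneg _).trans (hM' 0)
  have hx0 (x : ℝ) (hx : x ∈ uIcc a b) : x ≠ 0 := (pos_of_mem_uIcc ha (ha.trans_le hab) hx).ne'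
  have := hφ.continuous
  have := hφ.continuous_deriv le_rfl
  have hpointwise : ∀ x ∈ Icc a b,
      |-α * x ^ (-α - 1) * φ (x / L) + x ^ (-α) * (deriv φ (x / L) / L)|
        ≤ α * M * x ^ (-α - 1) + M' / L * x ^ (-α) := fun x hx ↦ by
    have hx : 0 < x := ha.trans_le hx.1
    have hφx : |-α * x ^ (-α - 1) * φ (x / L)| ≤ α * M * x ^ (-α - 1) := by
      rw [abs_mul, abs_mul, abs_neg, abs_of_pos hα0, abs_of_pos (rpow_pos_of_pos hx _),
        mul_right_comm α M]
      gcongr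
      exact hM _
    have hφ'x : |x ^ (-α) * (deriv φ (x / L) / L)| ≤ M' / L * x ^ (-α) := by
      rw [abs_mul, abs_div, abs_of_pos hL, abs_of_pos (rpow_pos_of_pos hx _), mul_comm]
      gcongr
      exact hM' _
    exact (abs_add_le _ _).trans (add_le_add hφx hφ'x)
  calc _ ≤ ∫ x in a..b, α * M * x ^ (-α - 1) + M' / L * x ^ (-α) :=
        integral_mono_on hab (ContinuousOn.intervalIntegrable (by fun_prop (disch := assumption)))
          (ContinuousOn.intervalIntegrable (by fun_prop (disch := assumption))) hpointwise
    _ = M * (α * ∫ x in a..b, x ^ (-α - 1))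
          + M' / ((1 - α) * L) * ((1 - α) * ∫ x in a..b, x ^ (-α)) := by
        rw [intervalIntegral.integral_add, intervalIntegral.integral_const_mul,
          intervalIntegral.integral_const_mul]
        · field_simp [(by linarith : 1 - α ≠ 0)]
        all_goals exact ContinuousOn.intervalIntegrable (by fun_prop (disch := assumption))
    _ ≤ M * a ^ (-α) + M' / ((1 - α) * L) * b ^ (1 - α) := by
        have : 0 < (1 - α) * L := mul_pos (by linarith) hL
        gcongr
        · exact mul_integral_rpow_neg_sub_one_le hα0 ha hab
        · exact mul_integral_rpow_neg_le hα1 ha.le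
    _ = _ := by ring

theorem norm_integral_rpow_mul_comp_div_mul_cexp_le {φ : ℝ → ℝ} {α L M M' a b t : ℝ}
    (hα0 : 0 < α) (hα1 : α < 1) (hφ : ContDiff ℝ 1 φ) (hM : ∀ x, |φ x| ≤ M)
    (hM' : ∀ x, |deriv φ x| ≤ M') (hL : 0 < L) (ht : t ≠ 0) (ha : 0 < a) (hab : a ≤ b) :
    ‖∫ x in a..b, ((x ^ (-α) * φ (x / L) : ℝ) : ℂ) * cexp (I * t * x)‖
      ≤ (3 * a ^ (-α) * M + b ^ (1 - α) * M' / ((1 - α) * L)) / |t| := by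
  have hx0 (x : ℝ) (hx : x ∈ uIcc a b) : x ≠ 0 := (pos_of_mem_uIcc ha (ha.trans_le hab) hx).ne'
  have := hφ.continuous
  have := hφ.continuous_deriv le_rfl
  refine (norm_integral_ofReal_mul_cexp_le hab ht
    (fun x hx ↦ hasDerivAt_rpow_mul_comp_div (hφ.differentiable one_ne_zero) _ L
      (pos_of_mem_uIcc ha (ha.trans_le hab) hx))
    (ContinuousOn.intervalIntegrable (by fun_prop (disch := assumption)))).trans
    (div_le_div_of_nonneg_right ?_ (abs_nonneg t))
  have hα := hα0.le
  linarith [abs_rpow_neg_mul_le hα ha le_rfl (hM (a / L)),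
    abs_rpow_neg_mul_le hα ha hab (hM (b / L)),
    integral_abs_deriv_rpow_mul_comp_div_le hα0 hα1 hφ hM hM' hL ha hab]

theorem exists_Ioc_ae_eq_setOf_lt_inter_Iic {a M : ℝ} {B : EReal} (haM : a ≤ M)
    (haB : (a : EReal) ≤ B) :
    ∃ b ∈ Icc a M, ({r : ℝ | a < r ∧ (r : EReal) < B} ∩ Iic M : Set ℝ) =ᵐ[volume] Ioc a b := by
  induction B using EReal.rec with
  | bot => exact absurd (le_bot_iff.mp haB) (EReal.coe_ne_bot a)
  | top =>
    refine ⟨M, ⟨haM, le_rfl⟩, .of_eq ?_⟩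
    simp only [EReal.coe_lt_top, and_true]
    exact Ioi_inter_Iic
  | coe β =>
    have hβ : a ≤ β := EReal.coe_le_coe_iff.mp haB
    refine ⟨min β M, ⟨le_min hβ haM, min_le_right _ _⟩, ?_⟩
    simp only [EReal.coe_lt_coe_iff]
    rw [← Ioc_inter_Iic]
    exact (Ioo_ae_eq_Ioc (a := a) (b := β)).inter (.refl _ _)

theorem exists_setIntegral_setOf_lt_eq_intervalIntegral {E : Type*} [NormedAddCommGroup E]
    [NormedSpace ℝ E] {f : ℝ → E} {a M : ℝ} {B : EReal} (haM : a ≤ M) (haB : (a : EReal) ≤ B)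
    (hf : ∀ x, M < x → f x = 0) :
    ∃ b ∈ Icc a M, ∫ r in {r : ℝ | a < r ∧ (r : EReal) < B}, f r = ∫ r in a..b, f r := by
  obtain ⟨b, hb, hae⟩ := exists_Ioc_ae_eq_setOf_lt_inter_Iic haM haB
  refine ⟨b, hb, ?_⟩
  rw [integral_of_le hb.1, ← setIntegral_congr_set hae,
    setIntegral_eq_of_subset_of_forall_sdiff_eq_zero (by measurability) inter_subset_left]
  exact fun x hx ↦ hf x (not_le.mp fun h ↦ hx.2 ⟨hx.1, h⟩)

theorem supNorm_nonneg (φ : ℝ → ℝ) : 0 ≤ supNorm φ :=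
  iSup_nonneg fun x ↦ abs_nonneg (φ x)

theorem abs_le_supNorm {φ : ℝ → ℝ} (hφ : Continuous φ) (hcs : HasCompactSupport φ) (x : ℝ) :
    |φ x| ≤ supNorm φ :=
  le_ciSup (hφ.abs.bddAbove_range_of_hasCompactSupport hcs.abs) x

theorem comp_div_eq_zero_of_support_subset_Icc {φ : ℝ → ℝ} {K L r : ℝ}
    (hsupp : Function.support φ ⊆ Icc (-K) K) (hL : 0 < L) (hr : K * L < r) : φ (r / L) = 0 :=
  Function.notMem_support.mp fun h ↦ (hsupp h).2.not_gt ((lt_div_iff₀ hL).mpr hr)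

theorem rpow_one_sub_div_le {α b K L : ℝ} (hα : α ≤ 1) (hb : 0 ≤ b) (hK : 0 ≤ K) (hL : 0 < L)
    (hbKL : b ≤ K * L) : b ^ (1 - α) / L ≤ K ^ (1 - α) * L ^ (-α) := by
  rw [div_le_iff₀ hL]
  calc b ^ (1 - α) ≤ (K * L) ^ (1 - α) := rpow_le_rpow hb hbKL (by linarith)
    _ = K ^ (1 - α) * L ^ (-α) * L := by
        rw [mul_rpow hK hL.le, mul_assoc, ← rpow_add_one hL.ne', neg_add_eq_sub]

theorem norm_integral_rpow_mul_comp_div_mul_cexp_le_supNorm {φ : ℝ → ℝ} {α K L a b t : ℝ}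
    (hα0 : 0 < α) (hα1 : α < 1) (hφ : ContDiff ℝ 1 φ) (hcs : HasCompactSupport φ) (hK : 0 ≤ K)
    (hL : 0 < L) (ht : |t| = 1) (ha : 0 < a) (hab : a ≤ b) (hbKL : b ≤ K * L) :
    ‖∫ x in a..b, ((x ^ (-α) * φ (x / L) : ℝ) : ℂ) * cexp (I * t * x)‖
      ≤ (3 + 1 / (1 - α))
        * (a ^ (-α) * supNorm φ + K ^ (1 - α) * L ^ (-α) * supNorm (deriv φ)) := by
  have h1α : 0 < 1 - α := by linarith
  have hM0 := supNorm_nonneg φ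
  have hM'0 := supNorm_nonneg (deriv φ)
  have hderiv_term : b ^ (1 - α) * supNorm (deriv φ) / ((1 - α) * L)
      ≤ 1 / (1 - α) * (K ^ (1 - α) * L ^ (-α) * supNorm (deriv φ)) := by
    rw [show b ^ (1 - α) * supNorm (deriv φ) / ((1 - α) * L)
      = 1 / (1 - α) * (b ^ (1 - α) / L * supNorm (deriv φ)) by field_simp]
    gcongr
    exact rpow_one_sub_div_le hα1.le (ha.le.trans hab) hK hL hbKL
  have hIBP := norm_integral_rpow_mul_comp_div_mul_cexp_le hα0 hα1 hφ
    (abs_le_supNorm hφ.continuous hcs) (abs_le_supNorm (hφ.continuous_deriv le_rfl) hcs.deriv) hL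
    (abs_pos.mp (ht ▸ one_pos)) ha hab
  rw [ht, div_one] at hIBP
  have hY : 0 ≤ K ^ (1 - α) * L ^ (-α) * supNorm (deriv φ) := by positivity
  linarith [mul_nonneg (one_div_pos.mpr h1α).le (mul_nonneg (rpow_nonneg ha.le (-α)) hM0)]

/-- uniform bound for oscillatory fractional integrals over `(B₁, B₂)`,
allowing `B₂ = ∞`. -/
theorem stmt0 (α : ℝ) (hα0 : 0 < α) (hα1 : α < 1) :
    ∃ C : ℝ, 0 < C ∧
      ∀ (K : ℝ), 1 ≤ K →
      ∀ (φ : ℝ → ℝ), ContDiff ℝ 1 φ →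
        Function.support φ ⊆ Set.Icc (-K) K →
      ∀ (l : ℝ), l = -1 ∨ l = 1 →
      ∀ (B₁ : ℝ) (B₂ : EReal) (L : ℝ), 0 < B₁ → (B₁ : EReal) ≤ B₂ → 1 ≤ L →
        ‖∫ r in {r : ℝ | B₁ < r ∧ (r : EReal) < B₂},
            ((r ^ (-α) : ℝ) : ℂ) * Complex.exp (Complex.I * (l : ℂ) * (r : ℂ))
              * ((φ (r / L) : ℝ) : ℂ)‖
          ≤ C * (B₁ ^ (-α) * supNorm φ + K ^ (1 - α) * L ^ (-α) * supNorm (deriv φ)) := by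
  have h1α : 0 < 1 - α := by linarith
  refine ⟨3 + 1 / (1 - α), by positivity, ?_⟩
  intro K hK φ hφ hsupp l hl B₁ B₂ L hB₁ hB₁B₂ hL
  have hL0 : 0 < L := one_pos.trans_le hL
  have hintegrand (r : ℝ) : ((r ^ (-α) : ℝ) : ℂ) * cexp (I * l * r) * ((φ (r / L) : ℝ) : ℂ)
      = ((r ^ (-α) * φ (r / L) : ℝ) : ℂ) * cexp (I * l * r) := by
    push_cast; ring
  have hvanish (r : ℝ) (hr : K * L < r) :
      ((r ^ (-α) * φ (r / L) : ℝ) : ℂ) * cexp (I * l * r) = 0 := by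
    rw [comp_div_eq_zero_of_support_subset_Icc hsupp hL0 hr, mul_zero, ofReal_zero, zero_mul]
  simp_rw [hintegrand]
  rcases lt_or_ge (K * L) B₁ with hKL | hKL
  · rw [setIntegral_eq_zero_of_forall_eq_zero fun r hr ↦ hvanish r (hKL.trans hr.1), norm_zero]
    have := supNorm_nonneg φ
    have := supNorm_nonneg (deriv φ)
    positivity
  obtain ⟨b, hb, heq⟩ := exists_setIntegral_setOf_lt_eq_intervalIntegral hKL hB₁B₂ hvanish
  rw [heq]
  exact norm_integral_rpow_mul_comp_div_mul_cexp_le_supNorm hα0 hα1 hφ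
    (.of_support_subset_isCompact isCompact_Icc hsupp) (zero_le_one.trans hK) hL0
    (by rcases hl with rfl | rfl <;> norm_num) hB₁ hb.1 hb.2
end

section
/- Let χ : ℝ → [0,1] be smooth with support in [-3/2, 3/2], and define the Fourier kernel I_χ(λ, λ') := ∫_ℝ e^{-iλt} χ(t) (∫_0^t e^{iλ's} χ(s) ds) dt. Then there is a constant C depending only on χ such that |I_χ(λ, λ')| ≤ C / (⟨λ⟩ ⟨λ - λ'⟩) for all λ, λ' ∈ ℝ. -/
open MeasureTheory Real intervalIntegral

section Helpers

noncomputable def Jf (ν : ℝ) (g : ℝ → ℂ) : ℂ :=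
  ∫ t in (-2:ℝ)..2, Complex.exp (-(Complex.I * ν * t)) * g t

lemma expderiv (ν : ℝ) (t : ℝ) :
    HasDerivAt (fun t : ℝ => Complex.exp (-(Complex.I * ν * t)))
      (-(Complex.I * ν) * Complex.exp (-(Complex.I * ν * t))) t := by
  have h1 : HasDerivAt (fun t : ℝ => (t : ℂ)) 1 t := by
    simpa using (hasDerivAt_id t).ofReal_comp
  have h2 : HasDerivAt (fun t : ℝ => -(Complex.I * ν * t)) (-(Complex.I * ν)) t := by
    simpa using ((h1.const_mul (Complex.I * ν)).fun_neg)
  simpa [mul_comm] using h2.cexp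

lemma expderiv' (ν : ℝ) (t : ℝ) :
    HasDerivAt (fun t : ℝ => Complex.exp (Complex.I * ν * t))
      (Complex.I * ν * Complex.exp (Complex.I * ν * t)) t := by
  have h1 : HasDerivAt (fun t : ℝ => (t : ℂ)) 1 t := by
    simpa using (hasDerivAt_id t).ofReal_comp
  have h2 : HasDerivAt (fun t : ℝ => Complex.I * ν * t) (Complex.I * ν) t := by
    simpa using (h1.const_mul (Complex.I * ν))
  simpa [mul_comm] using h2.cexp

lemma norm_exp_aux (ν t : ℝ) : ‖Complex.exp (-(Complex.I * ν * t))‖ = 1 := by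
  have h : -(Complex.I * ν * t) = ((-(ν * t) : ℝ) : ℂ) * Complex.I := by push_cast; ring
  rw [h, Complex.norm_exp_ofReal_mul_I]

lemma norm_exp_aux' (ν t : ℝ) : ‖Complex.exp (Complex.I * ν * t)‖ = 1 := by
  have h : Complex.I * (ν:ℂ) * (t:ℂ) = (((ν * t) : ℝ) : ℂ) * Complex.I := by push_cast; ring
  rw [h, Complex.norm_exp_ofReal_mul_I]

lemma contexp (ν : ℝ) : Continuous (fun t : ℝ => Complex.exp (-(Complex.I * ν * t))) := by
  fun_prop

lemma contexp' (ν : ℝ) : Continuous (fun t : ℝ => Complex.exp (Complex.I * ν * t)) := by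
  fun_prop

lemma exp_combine (l l' t : ℝ) :
    Complex.exp (-(Complex.I * l * t)) * Complex.exp (Complex.I * l' * t)
      = Complex.exp (-(Complex.I * (l - l') * t)) := by
  rw [← Complex.exp_add]; congr 1; push_cast; ring

lemma exp_combine2 (l l' t : ℝ) :
    Complex.exp (-(Complex.I * (l - l') * t)) * Complex.exp (-(Complex.I * l' * t))
      = Complex.exp (-(Complex.I * l * t)) := by
  rw [← Complex.exp_add]; congr 1; push_cast; ring

lemma norm_I_mul_real (x : ℝ) : ‖Complex.I * (x:ℂ)‖ = |x| := by
  rw [norm_mul, Complex.norm_I, one_mul, Complex.norm_real, Real.norm_eq_abs]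

lemma norm_inv_I_mul (x : ℝ) (X : ℂ) : ‖(Complex.I * x)⁻¹ * X‖ = |x|⁻¹ * ‖X‖ := by
  rw [norm_mul, norm_inv, norm_I_mul_real]

lemma I_mul_ne_zero {x : ℝ} (hx : x ≠ 0) : (Complex.I * x) ≠ 0 := by
  simp [Complex.ext_iff, hx, Complex.I_ne_zero]

lemma normMulLe {a b : ℂ} {x y : ℝ} (hx : ‖a‖ ≤ x) (hy : ‖b‖ ≤ y) (hx0 : 0 ≤ x) :
    ‖a * b‖ ≤ x * y := by
  rw [norm_mul]
  exact mul_le_mul hx hy (norm_nonneg _) hx0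

lemma ibpJ {g g' : ℝ → ℂ} (hg : ∀ t, HasDerivAt g (g' t) t) (hg' : Continuous g')
    (hm2 : g (-2) = 0) (h2 : g 2 = 0) {ν : ℝ} (hν : ν ≠ 0) :
    Jf ν g = (Complex.I * ν)⁻¹ * Jf ν g' := by
  have hgc : Continuous g := by
    rw [continuous_iff_continuousAt]; exact fun t => (hg t).continuousAt
  set e := fun t : ℝ => Complex.exp (-(Complex.I * ν * t)) with he
  have hec : Continuous e := contexp ν
  have hφ : ∀ t ∈ Set.uIcc (-2:ℝ) 2, HasDerivAt (fun t => e t * g t)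
      (-(Complex.I * ν) * e t * g t + e t * g' t) t := by
    intro t _
    have h := (expderiv ν t).fun_mul (hg t)
    convert h using 1 <;> ring
  have hint : IntervalIntegrable (fun t => -(Complex.I * ν) * e t * g t + e t * g' t)
      volume (-2) 2 :=
    (((continuous_const.mul hec).mul hgc).add (hec.mul hg')).intervalIntegrable _ _
  have key := integral_eq_sub_of_hasDerivAt hφ hint
  rw [h2, hm2, mul_zero, mul_zero, sub_zero] at key
  have hsplit : (∫ t in (-2:ℝ)..2, (-(Complex.I * ν) * e t * g t + e t * g' t))
      = -(Complex.I * ν) * Jf ν g + Jf ν g' := by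
    rw [intervalIntegral.integral_add
      ((((continuous_const.fun_mul hec).fun_mul hgc)).intervalIntegrable _ _)
      (((hec.fun_mul hg')).intervalIntegrable _ _)]
    congr 1
    rw [Jf, ← intervalIntegral.integral_const_mul]
    congr 1; funext t; ring
  rw [hsplit] at key
  have hIν : (Complex.I * ν) ≠ 0 := I_mul_ne_zero hν
  rw [inv_mul_eq_div, eq_div_iff hIν]
  linear_combination -key

lemma normJ {g : ℝ → ℂ} {M : ℝ} (ν : ℝ) (hM : ∀ t ∈ Set.Icc (-2:ℝ) 2, ‖g t‖ ≤ M) :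
    ‖Jf ν g‖ ≤ 4 * M := by
  have h := intervalIntegral.norm_integral_le_of_norm_le_const (a := (-2:ℝ)) (b := 2) (C := M)
    (f := fun t => Complex.exp (-(Complex.I * ν * t)) * g t) ?_
  · calc ‖Jf ν g‖ ≤ M * |(2:ℝ) - (-2)| := h
      _ = 4 * M := by norm_num; ring
  · intro x hx
    rw [norm_mul, norm_exp_aux, one_mul]
    refine hM x (Set.Ioc_subset_Icc_self ?_)
    rwa [Set.uIoc_of_le (by norm_num)] at hx

end Helpers

lemma arithD (a b L m1 m2 Kv Cv : ℝ) (ha : 1 < a) (hb : 1 < b) (hL : 0 ≤ L)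
    (hm1 : 0 ≤ m1) (hm2 : 0 ≤ m2) (hKv : 0 ≤ Kv)
    (hab : b ≤ a * (1 + L))
    (hC : 4 * (m2 * (2 + Kv)) + 4 * (m2 + m1 * m1) + 4 * (m1 + m1) ≤ Cv) :
    a⁻¹ * (a⁻¹ * (4 * (m2 * ((2 + Kv) / (1 + L))) + b⁻¹ * (4 * (m2 + m1 * m1)))
        + b⁻¹ * (4 * (m1 + m1)))
      ≤ Cv / (a * b) := by
  have ha0 : (0:ℝ) < a := by linarith
  have hb0 : (0:ℝ) < b := by linarith
  have hP1 : (0:ℝ) < 1 + L := by linarith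
  have heq : a⁻¹ * (a⁻¹ * (4 * (m2 * ((2 + Kv) / (1 + L))) + b⁻¹ * (4 * (m2 + m1 * m1)))
        + b⁻¹ * (4 * (m1 + m1)))
      = (4 * (m2 * (2 + Kv)) * b + 4 * (m2 + m1 * m1) * (1 + L)
          + 4 * (m1 + m1) * (a * (1 + L))) / (a * a * b * (1 + L)) := by
    field_simp
  have hgrow : (0:ℝ) ≤ (a - 1) * (1 + L) := mul_nonneg (by linarith) (by linarith)
  have hN : 4 * (m2 * (2 + Kv)) * b + 4 * (m2 + m1 * m1) * (1 + L)
        + 4 * (m1 + m1) * (a * (1 + L)) ≤ Cv * (a * (1 + L)) := by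
    have t1 : 4 * (m2 * (2 + Kv)) * b ≤ 4 * (m2 * (2 + Kv)) * (a * (1 + L)) :=
      mul_le_mul_of_nonneg_left hab (by positivity)
    have t2 : 4 * (m2 + m1 * m1) * (1 + L) ≤ 4 * (m2 + m1 * m1) * (a * (1 + L)) := by
      nlinarith [hgrow, mul_nonneg hm1 hm1]
    have hC2 := mul_le_mul_of_nonneg_right hC (show (0:ℝ) ≤ a * (1 + L) by positivity)
    nlinarith [t1, t2, hC2]
  rw [heq]
  have h1 : (4 * (m2 * (2 + Kv)) * b + 4 * (m2 + m1 * m1) * (1 + L)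
        + 4 * (m1 + m1) * (a * (1 + L))) / (a * a * b * (1 + L))
      ≤ (Cv * (a * (1 + L))) / (a * a * b * (1 + L)) := by gcongr
  refine le_trans h1 (le_of_eq ?_)
  field_simp



/-- Japanese bracket `⟨x⟩ = √(1 + x²)`. -/
noncomputable def jb (x : ℝ) : ℝ := Real.sqrt (1 + x ^ 2)

/-- The Fourier kernel `I_χ(λ, λ') = ∫ e^{-iλt} χ(t) (∫_0^t e^{iλ's} χ(s) ds) dt`. -/
noncomputable def Ichi (χ : ℝ → ℝ) (l l' : ℝ) : ℂ :=
  ∫ t : ℝ, Complex.exp (-(Complex.I * (l : ℂ) * (t : ℂ))) * ((χ t : ℝ) : ℂ) *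
    (∫ s in (0 : ℝ)..t, Complex.exp (Complex.I * (l' : ℂ) * (s : ℂ)) * ((χ s : ℝ) : ℂ))

set_option maxHeartbeats 1000000 in
/-- `|I_χ(λ, λ')| ≤ C / (⟨λ⟩ ⟨λ - λ'⟩)`. -/
theorem stmt5 (χ : ℝ → ℝ) (hχ : ContDiff ℝ (⊤ : ℕ∞) χ)
    (hrange : ∀ x, χ x ∈ Set.Icc (0 : ℝ) 1)
    (hsupp : Function.support χ ⊆ Set.Icc (-(3/2) : ℝ) (3/2)) :
    ∃ C : ℝ, 0 < C ∧ ∀ l l' : ℝ, ‖Ichi χ l l'‖ ≤ C / (jb l * jb (l - l')) := by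
  classical
  have hzero : ∀ t : ℝ, t ∉ Set.Icc (-(3/2) : ℝ) (3/2) → χ t = 0 := by
    intro t ht
    by_contra h
    exact ht (hsupp h)
  have habs : ∀ t, |χ t| ≤ 1 := by
    intro t; rcases hrange t with ⟨h0, h1⟩; rw [abs_le]; exact ⟨by linarith, h1⟩
  have hχ' : ContDiff ℝ (⊤ : ℕ∞) χ := hχ.of_le (by simp)
  have hdiff : Differentiable ℝ χ := hχ.differentiable (by simp)
  have hd1 : ContDiff ℝ (⊤ : ℕ∞) (deriv χ) := (contDiff_infty_iff_deriv.mp hχ').2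
  have hdiff1 : Differentiable ℝ (deriv χ) := hd1.differentiable (by simp)
  have hcont1 : Continuous (deriv χ) := hdiff1.continuous
  have hcont2 : Continuous (deriv (deriv χ)) :=
    ((contDiff_infty_iff_deriv.mp hd1).2).continuous
  have hz1 : ∀ t : ℝ, (3/2 : ℝ) < |t| → deriv χ t = 0 := by
    intro t ht
    have ho : IsOpen {x : ℝ | (3/2 : ℝ) < |x|} := isOpen_lt continuous_const continuous_abs
    have hev : χ =ᶠ[nhds t] (fun _ => (0:ℝ)) := by
      filter_upwards [ho.mem_nhds ht] with x hx
      refine hzero x ?_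
      intro hmem
      have hx' : (3/2:ℝ) < |x| := hx
      rcases hmem with ⟨h1, h2⟩
      rcases abs_cases x with h | h <;> linarith [h.1]
    have := hev.deriv_eq
    simpa using this
  obtain ⟨M₁, hM₁⟩ := (isCompact_Icc (a := (-2:ℝ)) (b := 2)).exists_bound_of_continuousOn
    hcont1.continuousOn
  obtain ⟨M₂, hM₂⟩ := (isCompact_Icc (a := (-2:ℝ)) (b := 2)).exists_bound_of_continuousOn
    hcont2.continuousOn
  have hM₁0 : 0 ≤ M₁ := le_trans (norm_nonneg _) (hM₁ 0 (by norm_num))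
  have hM₂0 : 0 ≤ M₂ := le_trans (norm_nonneg _) (hM₂ 0 (by norm_num))
  set K : ℝ := 2 + 2 * M₁ with hK
  have hK0 : 0 ≤ K := by positivity
  set C' : ℝ := 8 + 4 * (K + (M₁ * 2 + 1)) + (4 * (M₁ * 2) + 4 * 1)
      + (4 * (M₂ * (2 + K)) + 4 * (M₂ + M₁ * M₁) + 4 * (M₁ + M₁)) with hC'
  have hC'0 : (0:ℝ) < C' := by positivity
  refine ⟨2 * C', by positivity, ?_⟩
  intro l l'
  set μ : ℝ := l - l' with hμdef
  have hjb : ∀ x : ℝ, jb x ≤ Real.sqrt 2 * max 1 |x| := by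
    intro x
    rw [jb]
    have hx : |x| ≤ max 1 |x| := le_max_right _ _
    have h1' : (1:ℝ) ≤ max 1 |x| := le_max_left _ _
    have h1 : (1 : ℝ) + x ^ 2 ≤ 2 * (max 1 |x|) ^ 2 := by
      nlinarith [sq_abs x, mul_self_le_mul_self (abs_nonneg x) hx,
        mul_self_le_mul_self zero_le_one h1']
    calc Real.sqrt (1 + x ^ 2) ≤ Real.sqrt (2 * (max 1 |x|) ^ 2) := Real.sqrt_le_sqrt h1
      _ = Real.sqrt 2 * max 1 |x| := by
          rw [Real.sqrt_mul (by norm_num)]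
          congr 1
          exact Real.sqrt_sq (by positivity)
  have hjbpos : ∀ x : ℝ, 0 < jb x := fun x => Real.sqrt_pos.mpr (by positivity)
  suffices hmain : ‖Ichi χ l l'‖ ≤ C' / (max 1 |l| * max 1 |μ|) by
    have hm1 : (0:ℝ) < max 1 |l| := lt_of_lt_of_le one_pos (le_max_left _ _)
    have hm2 : (0:ℝ) < max 1 |μ| := lt_of_lt_of_le one_pos (le_max_left _ _)
    have hprod : jb l * jb μ ≤ 2 * (max 1 |l| * max 1 |μ|) := by
      calc jb l * jb μ ≤ (Real.sqrt 2 * max 1 |l|) * (Real.sqrt 2 * max 1 |μ|) :=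
            mul_le_mul (hjb l) (hjb μ) (le_of_lt (hjbpos _)) (by positivity)
        _ = (Real.sqrt 2 * Real.sqrt 2) * (max 1 |l| * max 1 |μ|) := by ring
        _ = 2 * (max 1 |l| * max 1 |μ|) := by rw [Real.mul_self_sqrt (by norm_num)]
    refine le_trans hmain ?_
    rw [div_le_div_iff₀ (by positivity) (mul_pos (hjbpos l) (hjbpos μ))]
    calc C' * (jb l * jb μ) ≤ C' * (2 * (max 1 |l| * max 1 |μ|)) :=
          mul_le_mul_of_nonneg_left hprod (le_of_lt hC'0)
      _ = 2 * C' * (max 1 |l| * max 1 |μ|) := by ring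
  -- local functions
  set c : ℝ → ℂ := fun t => ((χ t : ℝ) : ℂ) with hc_def
  set F : ℝ → ℂ := fun t => ∫ s in (0:ℝ)..t, Complex.exp (Complex.I * l' * s) * c s with hF_def
  have hcc : Continuous c := Complex.continuous_ofReal.comp hχ'.continuous
  have hd1c : Continuous (fun t : ℝ => ((deriv χ t : ℝ) : ℂ)) :=
    Complex.continuous_ofReal.comp hcont1
  have hd2c : Continuous (fun t : ℝ => ((deriv (deriv χ) t : ℝ) : ℂ)) :=
    Complex.continuous_ofReal.comp hcont2
  have hinte : Continuous (fun s : ℝ => Complex.exp (Complex.I * l' * s) * c s) :=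
    (contexp' l').mul hcc
  have hFd : ∀ t : ℝ, HasDerivAt F (Complex.exp (Complex.I * l' * t) * c t) t := by
    intro t
    exact intervalIntegral.integral_hasDerivAt_right (hinte.intervalIntegrable _ _)
      (hinte.stronglyMeasurableAtFilter _ _) hinte.continuousAt
  have hFc : Continuous F := by
    rw [continuous_iff_continuousAt]; exact fun t => (hFd t).continuousAt
  have hcd : ∀ t, HasDerivAt c (((deriv χ t : ℝ) : ℂ)) t := fun t =>
    (hdiff t).hasDerivAt.ofReal_comp
  have hd1d : ∀ t, HasDerivAt (fun t : ℝ => ((deriv χ t : ℝ) : ℂ))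
      (((deriv (deriv χ) t : ℝ) : ℂ)) t := fun t => (hdiff1 t).hasDerivAt.ofReal_comp
  have hcnorm : ∀ t, ‖c t‖ ≤ 1 := by
    intro t
    simp only [hc_def]
    simpa [Complex.norm_real, Real.norm_eq_abs] using habs t
  have hd1norm : ∀ t ∈ Set.Icc (-2:ℝ) 2, ‖((deriv χ t : ℝ) : ℂ)‖ ≤ M₁ := by
    intro t ht; simpa [Complex.norm_real, Real.norm_eq_abs] using hM₁ t ht
  have hd2norm : ∀ t ∈ Set.Icc (-2:ℝ) 2, ‖((deriv (deriv χ) t : ℝ) : ℂ)‖ ≤ M₂ := by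
    intro t ht; simpa [Complex.norm_real, Real.norm_eq_abs] using hM₂ t ht
  have hχ2 : χ 2 = 0 := hzero 2 (by norm_num)
  have hχm2 : χ (-2) = 0 := hzero (-2) (by norm_num)
  have hc2 : c 2 = 0 := by simp only [hc_def]; simp [hχ2]
  have hcm2 : c (-2) = 0 := by simp only [hc_def]; simp [hχm2]
  have hd1_2 : deriv χ 2 = 0 := hz1 2 (by rw [abs_of_nonneg] <;> norm_num)
  have hd1_m2 : deriv χ (-2) = 0 := hz1 (-2) (by rw [abs_of_nonpos] <;> norm_num)
  -- bounds on F
  have hIoc_sub : ∀ t ∈ Set.Icc (-2:ℝ) 2, Set.uIoc (0:ℝ) t ⊆ Set.Icc (-2:ℝ) 2 := by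
    intro t ht x hx
    rcases hx with ⟨hx1, hx2⟩
    constructor
    · have : -2 ≤ min (0:ℝ) t := le_min (by norm_num) ht.1
      linarith
    · have : max (0:ℝ) t ≤ 2 := max_le (by norm_num) ht.2
      linarith
  have hF2 : ∀ t ∈ Set.Icc (-2:ℝ) 2, ‖F t‖ ≤ 2 := by
    intro t ht
    have h := intervalIntegral.norm_integral_le_of_norm_le_const (a := (0:ℝ)) (b := t) (C := 1)
      (f := fun s => Complex.exp (Complex.I * l' * s) * c s) ?_
    · calc ‖F t‖ ≤ 1 * |t - 0| := h
        _ ≤ 2 := by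
            rw [one_mul, sub_zero]
            exact abs_le.mpr ⟨by linarith [ht.1], by linarith [ht.2]⟩
    · intro x _
      rw [norm_mul, norm_exp_aux', one_mul]
      exact hcnorm x
  have hF3 : ∀ t ∈ Set.Icc (-2:ℝ) 2, |l'| * ‖F t‖ ≤ K := by
    rcases eq_or_ne l' 0 with h0 | hl'
    · intro t ht; rw [h0]; simpa using hK0
    · have hIl' : (Complex.I * (l' : ℂ)) ≠ 0 := I_mul_ne_zero hl'
      intro t ht
      have hv : ∀ s : ℝ, HasDerivAt
          (fun s : ℝ => (Complex.I * l')⁻¹ * Complex.exp (Complex.I * l' * s))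
          (Complex.exp (Complex.I * l' * s)) s := by
        intro s
        have h1 := (expderiv' l' s).const_mul ((Complex.I * (l':ℂ))⁻¹)
        rw [inv_mul_cancel_left₀ hIl'] at h1
        exact h1
      have hφd : ∀ s ∈ Set.uIcc (0:ℝ) t, HasDerivAt
          (fun s : ℝ => (Complex.I * l')⁻¹ * Complex.exp (Complex.I * l' * s) * c s)
          (Complex.exp (Complex.I * l' * s) * c s
            + (Complex.I * l')⁻¹ * Complex.exp (Complex.I * l' * s) * ((deriv χ s : ℝ) : ℂ))
          s := by
        intro s _
        exact (hv s).mul (hcd s)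
      have hvc : Continuous (fun s : ℝ => (Complex.I * (l':ℂ))⁻¹
          * Complex.exp (Complex.I * l' * s) * ((deriv χ s : ℝ) : ℂ)) := by fun_prop
      have hint2 : IntervalIntegrable (fun s : ℝ => Complex.exp (Complex.I * l' * s) * c s
          + (Complex.I * l')⁻¹ * Complex.exp (Complex.I * l' * s) * ((deriv χ s : ℝ) : ℂ))
          volume 0 t :=
        (hinte.add hvc).intervalIntegrable _ _
      have key := integral_eq_sub_of_hasDerivAt hφd hint2
      have hsplit := intervalIntegral.integral_add
        (hinte.intervalIntegrable (μ := volume) (0:ℝ) t)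
        (hvc.intervalIntegrable (μ := volume) (0:ℝ) t)
      rw [hsplit] at key
      have hFt : F t = ((Complex.I * l')⁻¹ * Complex.exp (Complex.I * l' * t) * c t
          - (Complex.I * l')⁻¹ * Complex.exp (Complex.I * l' * 0) * c 0)
          - ∫ s in (0:ℝ)..t, (Complex.I * l')⁻¹ * Complex.exp (Complex.I * l' * s)
              * ((deriv χ s : ℝ) : ℂ) := by
        rw [hF_def]
        linear_combination key
      have hnv : ∀ s : ℝ, ‖(Complex.I * (l':ℂ))⁻¹ * Complex.exp (Complex.I * l' * s)‖
          = |l'|⁻¹ := by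
        intro s
        rw [norm_inv_I_mul, norm_exp_aux', mul_one]
      have hbnd : ‖∫ s in (0:ℝ)..t, (Complex.I * l')⁻¹ * Complex.exp (Complex.I * l' * s)
          * ((deriv χ s : ℝ) : ℂ)‖ ≤ |l'|⁻¹ * M₁ * |t - 0| := by
        refine intervalIntegral.norm_integral_le_of_norm_le_const ?_
        intro x hx
        rw [norm_mul, hnv]
        exact mul_le_mul_of_nonneg_left (hd1norm x (hIoc_sub t ht hx)) (by positivity)
      have habs_t : |t - 0| ≤ 2 := by
        rw [sub_zero]; exact abs_le.mpr ⟨by linarith [ht.1], by linarith [ht.2]⟩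
      have hFbound : ‖F t‖ ≤ |l'|⁻¹ * K := by
        rw [hFt]
        have h1 : ‖(Complex.I * (l':ℂ))⁻¹ * Complex.exp (Complex.I * l' * t) * c t‖
            ≤ |l'|⁻¹ := by
          rw [norm_mul, hnv]
          exact le_trans (mul_le_mul_of_nonneg_left (hcnorm t) (by positivity)) (by simp)
        have h2 : ‖(Complex.I * (l':ℂ))⁻¹ * Complex.exp (Complex.I * l' * 0) * c 0‖
            ≤ |l'|⁻¹ := by
          have h0 := hnv 0
          rw [Complex.ofReal_zero] at h0
          rw [norm_mul, h0]
          exact le_trans (mul_le_mul_of_nonneg_left (hcnorm 0) (by positivity)) (by simp)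
        have h3 : |l'|⁻¹ * M₁ * |t - 0| ≤ |l'|⁻¹ * M₁ * 2 :=
          mul_le_mul_of_nonneg_left habs_t (by positivity)
        have h4 := norm_sub_le ((Complex.I * (l':ℂ))⁻¹ * Complex.exp (Complex.I * l' * t) * c t)
          ((Complex.I * l')⁻¹ * Complex.exp (Complex.I * l' * 0) * c 0)
        have h5 := norm_sub_le ((Complex.I * (l':ℂ))⁻¹ * Complex.exp (Complex.I * l' * t) * c t
          - (Complex.I * l')⁻¹ * Complex.exp (Complex.I * l' * 0) * c 0)
          (∫ s in (0:ℝ)..t, (Complex.I * l')⁻¹ * Complex.exp (Complex.I * l' * s)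
              * ((deriv χ s : ℝ) : ℂ))
        have h6 := le_trans hbnd h3
        calc ‖_ - _‖ ≤ _ := h5
          _ ≤ |l'|⁻¹ * K := by
              rw [hK]
              have := add_le_add (le_trans h4 (add_le_add h1 h2)) h6
              refine le_trans this ?_
              ring_nf
              nlinarith [abs_nonneg l', inv_nonneg.mpr (abs_nonneg l'), hM₁0]
      have hl'pos : 0 < |l'| := abs_pos.mpr hl'
      calc |l'| * ‖F t‖ ≤ |l'| * (|l'|⁻¹ * K) :=
            mul_le_mul_of_nonneg_left hFbound (abs_nonneg _)
        _ = K := by field_simp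
  have hF4 : ∀ t ∈ Set.Icc (-2:ℝ) 2, ‖F t‖ ≤ (2 + K) / (1 + |l'|) := by
    intro t ht
    rw [le_div_iff₀ (by positivity)]
    have h2 := hF2 t ht
    have h3 := hF3 t ht
    nlinarith [norm_nonneg (F t)]
  -- key functions
  set g₀ : ℝ → ℂ := fun t => c t * F t with hg₀_def
  set G₀' : ℝ → ℂ := fun t => ((deriv χ t : ℝ) : ℂ) * F t
      + c t * (Complex.exp (Complex.I * l' * t) * c t) with hG₀'_def
  have hg₀ : ∀ t, HasDerivAt g₀ (G₀' t) t := fun t => (hcd t).mul (hFd t)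
  have hg₀c : Continuous g₀ := hcc.mul hFc
  have hG₀'c : Continuous G₀' := (hd1c.mul hFc).add (hcc.mul ((contexp' l').mul hcc))
  set g₁ : ℝ → ℂ := fun t => ((deriv χ t : ℝ) : ℂ) * F t with hg₁_def
  set G₁' : ℝ → ℂ := fun t => ((deriv (deriv χ) t : ℝ) : ℂ) * F t
      + ((deriv χ t : ℝ) : ℂ) * (Complex.exp (Complex.I * l' * t) * c t) with hG₁'_def
  have hg₁ : ∀ t, HasDerivAt g₁ (G₁' t) t := fun t => (hd1d t).mul (hFd t)
  have hg₁c : Continuous g₁ := hd1c.mul hFc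
  have hG₁'c : Continuous G₁' := (hd2c.mul hFc).add (hd1c.mul ((contexp' l').mul hcc))
  set p2 : ℝ → ℂ := fun t => c t * c t with hp2_def
  set P2' : ℝ → ℂ := fun t => ((deriv χ t : ℝ) : ℂ) * c t + c t * ((deriv χ t : ℝ) : ℂ)
    with hP2'_def
  have hp2d : ∀ t, HasDerivAt p2 (P2' t) t := fun t => (hcd t).mul (hcd t)
  have hp2c : Continuous p2 := hcc.mul hcc
  have hP2'c : Continuous P2' := (hd1c.mul hcc).add (hcc.mul hd1c)
  set p3 : ℝ → ℂ := fun t => ((deriv χ t : ℝ) : ℂ) * c t with hp3_def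
  set P3' : ℝ → ℂ := fun t => ((deriv (deriv χ) t : ℝ) : ℂ) * c t
      + ((deriv χ t : ℝ) : ℂ) * ((deriv χ t : ℝ) : ℂ) with hP3'_def
  have hp3d : ∀ t, HasDerivAt p3 (P3' t) t := fun t => (hd1d t).mul (hcd t)
  have hp3c : Continuous p3 := hd1c.mul hcc
  have hP3'c : Continuous P3' := (hd2c.mul hcc).add (hd1c.mul hd1c)
  set g₂ : ℝ → ℂ := fun t => ((deriv (deriv χ) t : ℝ) : ℂ) * F t with hg₂_def
  have hg₂c : Continuous g₂ := hd2c.mul hFc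
  -- Ichi as interval integral
  have hI0 : Ichi χ l l' = Jf l g₀ := by
    have hsub : Function.support
        (fun t : ℝ => Complex.exp (-(Complex.I * l * t)) * c t * F t)
        ⊆ Set.Ioc (-2:ℝ) 2 := by
      intro t ht
      simp only [Function.mem_support] at ht
      have hχt : χ t ≠ 0 := by
        intro h0
        apply ht
        simp only [hc_def]
        simp [h0]
      have hmem := hsupp hχt
      exact ⟨by linarith [hmem.1], by linarith [hmem.2]⟩
    have h1 : Ichi χ l l'
        = ∫ t in (-2:ℝ)..2, Complex.exp (-(Complex.I * l * t)) * c t * F t :=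
      (intervalIntegral.integral_eq_integral_of_support_subset hsub).symm
    rw [h1, Jf]
    congr 1
    funext t
    rw [mul_assoc]
  -- identities
  have hE1 : l ≠ 0 → Jf l g₀ = (Complex.I * l)⁻¹ * (Jf l g₁ + Jf μ p2) := by
    intro hl
    rw [ibpJ hg₀ hG₀'c (by simp only [hg₀_def]; simp [hcm2])
      (by simp only [hg₀_def]; simp [hc2]) hl]
    congr 1
    rw [Jf, Jf, Jf, ← intervalIntegral.integral_add
      (((contexp l).fun_mul hg₁c).intervalIntegrable _ _)
      (((contexp μ).fun_mul hp2c).intervalIntegrable _ _)]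
    apply intervalIntegral.integral_congr
    intro t _
    simp only [hG₀'_def, hg₁_def, hp2_def]
    rw [hμdef]
    push_cast
    rw [← exp_combine l l' t]
    ring
  have hE2 : l ≠ 0 → Jf l g₁ = (Complex.I * l)⁻¹ * (Jf l g₂ + Jf μ p3) := by
    intro hl
    rw [ibpJ hg₁ hG₁'c (by simp only [hg₁_def]; simp [hd1_m2])
      (by simp only [hg₁_def]; simp [hd1_2]) hl]
    congr 1
    rw [Jf, Jf, Jf, ← intervalIntegral.integral_add
      (((contexp l).fun_mul hg₂c).intervalIntegrable _ _)
      (((contexp μ).fun_mul hp3c).intervalIntegrable _ _)]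
    apply intervalIntegral.integral_congr
    intro t _
    simp only [hG₁'_def, hg₂_def, hp3_def]
    rw [hμdef]
    push_cast
    rw [← exp_combine l l' t]
    ring
  have hE3 : μ ≠ 0 → Jf μ p2 = (Complex.I * μ)⁻¹ * Jf μ P2' := by
    intro hμ
    exact ibpJ hp2d hP2'c (by simp only [hp2_def]; simp [hcm2])
      (by simp only [hp2_def]; simp [hc2]) hμ
  have hE4 : μ ≠ 0 → Jf μ p3 = (Complex.I * μ)⁻¹ * Jf μ P3' := by
    intro hμ
    exact ibpJ hp3d hP3'c (by simp only [hp3_def]; simp [hcm2])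
      (by simp only [hp3_def]; simp [hc2]) hμ
  -- the "small l" identity
  set hfun : ℝ → ℂ := fun t => Complex.exp (-(Complex.I * l' * t)) * g₀ t with hh_def
  set H' : ℝ → ℂ := fun t => -(Complex.I * l') * Complex.exp (-(Complex.I * l' * t)) * g₀ t
      + Complex.exp (-(Complex.I * l' * t)) * G₀' t with hH'_def
  have hhd : ∀ t, HasDerivAt hfun (H' t) t := fun t => (expderiv l' t).mul (hg₀ t)
  have hH'c : Continuous H' :=
    ((continuous_const.mul (contexp l')).mul hg₀c).add ((contexp l').mul hG₀'c)
  have hE5 : μ ≠ 0 → Jf l g₀ = (Complex.I * μ)⁻¹ * Jf μ H' := by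
    intro hμ
    have h1 : Jf l g₀ = Jf μ hfun := by
      rw [Jf, Jf]
      apply intervalIntegral.integral_congr
      intro t _
      simp only [hh_def]
      have hcomb : Complex.exp (-(Complex.I * μ * t)) * Complex.exp (-(Complex.I * l' * t))
          = Complex.exp (-(Complex.I * l * t)) := by
        rw [← Complex.exp_add]
        congr 1
        rw [hμdef]
        push_cast
        ring
      rw [← hcomb, mul_assoc]
    rw [h1]
    exact ibpJ hhd hH'c (by simp only [hh_def, hg₀_def]; simp [hcm2])
      (by simp only [hh_def, hg₀_def]; simp [hc2]) hμ
  -- norm bounds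
  have hB0 : ‖Jf l g₀‖ ≤ 4 * 2 := by
    refine normJ l ?_
    intro t ht
    simp only [hg₀_def]
    calc ‖c t * F t‖ ≤ 1 * 2 := normMulLe (hcnorm t) (hF2 t ht) zero_le_one
      _ = 2 := one_mul 2
  have hBp2 : ‖Jf μ p2‖ ≤ 4 * 1 := by
    refine normJ μ ?_
    intro t ht
    simp only [hp2_def]
    calc ‖c t * c t‖ ≤ 1 * 1 := normMulLe (hcnorm t) (hcnorm t) zero_le_one
      _ = 1 := one_mul 1
  have hBp2' : μ ≠ 0 → ‖Jf μ p2‖ ≤ |μ|⁻¹ * (4 * (M₁ + M₁)) := by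
    intro hμ
    rw [hE3 hμ, norm_inv_I_mul]
    refine mul_le_mul_of_nonneg_left ?_ (by positivity)
    refine normJ μ ?_
    intro t ht
    simp only [hP2'_def]
    calc ‖_ + _‖ ≤ ‖((deriv χ t : ℝ) : ℂ) * c t‖ + ‖c t * ((deriv χ t : ℝ) : ℂ)‖ :=
          norm_add_le _ _
      _ ≤ M₁ * 1 + 1 * M₁ := add_le_add
          (normMulLe (hd1norm t ht) (hcnorm t) hM₁0)
          (normMulLe (hcnorm t) (hd1norm t ht) zero_le_one)
      _ = M₁ + M₁ := by ring
  have hBp3 : μ ≠ 0 → ‖Jf μ p3‖ ≤ |μ|⁻¹ * (4 * (M₂ + M₁ * M₁)) := by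
    intro hμ
    rw [hE4 hμ, norm_inv_I_mul]
    refine mul_le_mul_of_nonneg_left ?_ (by positivity)
    refine normJ μ ?_
    intro t ht
    simp only [hP3'_def]
    calc ‖_ + _‖ ≤ ‖((deriv (deriv χ) t : ℝ) : ℂ) * c t‖
          + ‖((deriv χ t : ℝ) : ℂ) * ((deriv χ t : ℝ) : ℂ)‖ := norm_add_le _ _
      _ ≤ M₂ * 1 + M₁ * M₁ := add_le_add
          (normMulLe (hd2norm t ht) (hcnorm t) hM₂0)
          (normMulLe (hd1norm t ht) (hd1norm t ht) hM₁0)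
      _ = M₂ + M₁ * M₁ := by ring
  have hBg₁ : ‖Jf l g₁‖ ≤ 4 * (M₁ * 2) := by
    refine normJ l ?_
    intro t ht
    simp only [hg₁_def]
    exact normMulLe (hd1norm t ht) (hF2 t ht) hM₁0
  have hBg₂ : ‖Jf l g₂‖ ≤ 4 * (M₂ * ((2 + K) / (1 + |l'|))) := by
    refine normJ l ?_
    intro t ht
    simp only [hg₂_def]
    exact normMulLe (hd2norm t ht) (hF4 t ht) hM₂0
  have hBH' : ‖Jf μ H'‖ ≤ 4 * (K + (M₁ * 2 + 1)) := by
    refine normJ μ ?_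
    intro t ht
    simp only [hH'_def]
    have hA : ‖-(Complex.I * (l':ℂ)) * Complex.exp (-(Complex.I * l' * t)) * g₀ t‖ ≤ K := by
      rw [norm_mul, norm_mul, norm_neg, norm_I_mul_real, norm_exp_aux, mul_one]
      have hg₀F : ‖g₀ t‖ ≤ ‖F t‖ := by
        simp only [hg₀_def]
        rw [norm_mul]
        exact mul_le_of_le_one_left (norm_nonneg _) (hcnorm t)
      calc |l'| * ‖g₀ t‖ ≤ |l'| * ‖F t‖ := mul_le_mul_of_nonneg_left hg₀F (abs_nonneg _)
        _ ≤ K := hF3 t ht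
    have hB : ‖Complex.exp (-(Complex.I * l' * t)) * G₀' t‖ ≤ M₁ * 2 + 1 := by
      rw [norm_mul, norm_exp_aux, one_mul]
      simp only [hG₀'_def]
      calc ‖_ + _‖ ≤ ‖((deriv χ t : ℝ) : ℂ) * F t‖
            + ‖c t * (Complex.exp (Complex.I * l' * t) * c t)‖ := norm_add_le _ _
        _ ≤ M₁ * 2 + 1 * (1 * 1) := add_le_add
            (normMulLe (hd1norm t ht) (hF2 t ht) hM₁0)
            (normMulLe (hcnorm t)
              (normMulLe (le_of_eq (norm_exp_aux' l' t)) (hcnorm t) zero_le_one)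
              zero_le_one)
        _ = M₁ * 2 + 1 := by ring
    calc ‖_ + _‖ ≤ _ + _ := norm_add_le _ _
      _ ≤ K + (M₁ * 2 + 1) := add_le_add hA hB
  -- case analysis
  rw [hI0]
  have habsum : |μ| ≤ |l| + |l'| := by rw [hμdef]; exact abs_sub l l'
  by_cases hl1 : |l| ≤ 1
  · by_cases hm1 : |μ| ≤ 1
    · -- case A
      rw [max_eq_left hl1, max_eq_left hm1]
      calc ‖Jf l g₀‖ ≤ 4 * 2 := hB0
        _ ≤ C' / (1 * 1) := by
            rw [mul_one, div_one, hC']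
            nlinarith [hM₁0, hM₂0, hK0, mul_nonneg hM₂0 hK0, mul_nonneg hM₁0 hM₁0]
    · -- case B : |l| ≤ 1 < |μ|
      push_neg at hm1
      have hb0 : (0:ℝ) < |μ| := by linarith
      have hμne : μ ≠ 0 := by
        intro h
        rw [h] at hb0
        simp at hb0
      rw [max_eq_left hl1, max_eq_right (le_of_lt hm1), one_mul]
      rw [hE5 hμne, norm_inv_I_mul]
      calc |μ|⁻¹ * ‖Jf μ H'‖ ≤ |μ|⁻¹ * (4 * (K + (M₁ * 2 + 1))) :=
            mul_le_mul_of_nonneg_left hBH' (by positivity)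
        _ = (4 * (K + (M₁ * 2 + 1))) / |μ| := by rw [inv_mul_eq_div]
        _ ≤ C' / |μ| := by
            gcongr
            rw [hC']
            nlinarith [hM₁0, hM₂0, hK0, mul_nonneg hM₂0 hK0, mul_nonneg hM₁0 hM₁0]
  · push_neg at hl1
    have ha0 : (0:ℝ) < |l| := by linarith
    have hlne : l ≠ 0 := by
      intro h
      rw [h] at ha0
      simp at ha0
    by_cases hm1 : |μ| ≤ 1
    · -- case C : |μ| ≤ 1 < |l|
      rw [max_eq_right (le_of_lt hl1), max_eq_left hm1, mul_one]
      rw [hE1 hlne, norm_inv_I_mul]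
      have hsum : ‖Jf l g₁ + Jf μ p2‖ ≤ 4 * (M₁ * 2) + 4 * 1 :=
        le_trans (norm_add_le _ _) (add_le_add hBg₁ hBp2)
      calc |l|⁻¹ * ‖Jf l g₁ + Jf μ p2‖ ≤ |l|⁻¹ * (4 * (M₁ * 2) + 4 * 1) :=
            mul_le_mul_of_nonneg_left hsum (by positivity)
        _ = (4 * (M₁ * 2) + 4 * 1) / |l| := by rw [inv_mul_eq_div]
        _ ≤ C' / |l| := by
            gcongr
            rw [hC']
            nlinarith [hM₁0, hM₂0, hK0, mul_nonneg hM₂0 hK0, mul_nonneg hM₁0 hM₁0]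
    · -- case D : 1 < |l|, 1 < |μ|
      push_neg at hm1
      have hb0 : (0:ℝ) < |μ| := by linarith
      have hμne : μ ≠ 0 := by
        intro h
        rw [h] at hb0
        simp at hb0
      have hL0 : (0:ℝ) ≤ |l'| := abs_nonneg _
      have hab : |μ| ≤ |l| * (1 + |l'|) := by nlinarith [habsum, hl1.le, hL0]
      rw [max_eq_right (le_of_lt hl1), max_eq_right (le_of_lt hm1)]
      rw [hE1 hlne, hE2 hlne, norm_inv_I_mul]
      have hstep1 : ‖(Complex.I * (l:ℂ))⁻¹ * (Jf l g₂ + Jf μ p3) + Jf μ p2‖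
          ≤ |l|⁻¹ * (4 * (M₂ * ((2 + K) / (1 + |l'|))) + |μ|⁻¹ * (4 * (M₂ + M₁ * M₁)))
            + |μ|⁻¹ * (4 * (M₁ + M₁)) := by
        refine le_trans (norm_add_le _ _) (add_le_add ?_ (hBp2' hμne))
        rw [norm_inv_I_mul]
        refine mul_le_mul_of_nonneg_left ?_ (by positivity)
        exact le_trans (norm_add_le _ _) (add_le_add hBg₂ (hBp3 hμne))
      have hstep2 : |l|⁻¹ * (|l|⁻¹ * (4 * (M₂ * ((2 + K) / (1 + |l'|)))
            + |μ|⁻¹ * (4 * (M₂ + M₁ * M₁))) + |μ|⁻¹ * (4 * (M₁ + M₁)))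
          ≤ C' / (|l| * |μ|) := by
        refine arithD |l| |μ| |l'| M₁ M₂ K C' hl1 hm1 (abs_nonneg _) hM₁0 hM₂0 hK0 hab ?_
        rw [hC']
        nlinarith [hM₁0, hM₂0, hK0]
      calc |l|⁻¹ * ‖(Complex.I * (l:ℂ))⁻¹ * (Jf l g₂ + Jf μ p3) + Jf μ p2‖
          ≤ |l|⁻¹ * (|l|⁻¹ * (4 * (M₂ * ((2 + K) / (1 + |l'|)))
              + |μ|⁻¹ * (4 * (M₂ + M₁ * M₁))) + |μ|⁻¹ * (4 * (M₁ + M₁))) :=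
            mul_le_mul_of_nonneg_left hstep1 (by positivity)
        _ ≤ C' / (|l| * |μ|) := hstep2
end

section
/- For all real exponents α, β with 0 ≤ α < β ≤ 1 and α + β > 1, the supremum over a ∈ ℝ of ∫_ℝ |ξ|^{-α} ⟨ξ + a⟩^{-β} dξ is finite, where ⟨x⟩ = (1+x²)^{1/2}. -/
/-!
Write `w(x) = |x|^{-α} ⟨x⟩^{-β}`. Both factors decrease in `|x|`, so whichever of `|ξ|` and
`|ξ + a|` is smaller, the integrand `|ξ|^{-α} ⟨ξ + a⟩^{-β}` is bounded by `w(ξ)` or by `w(ξ + a)`.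
Hence the integral is at most `2 ∫ w`, independently of `a`, and `w` is integrable because it is
`O(|x|^{-α})` near `0` with `α < 1` and `O(|x|^{-(α+β)})` at infinity with `α + β > 1`.
-/

open MeasureTheory Real ENNReal

open Set

lemma jb_pos (x : ℝ) : 0 < jb x := Real.sqrt_pos.2 (by positivity)

lemma one_le_jb (x : ℝ) : 1 ≤ jb x :=
  Real.one_le_sqrt.2 (le_add_of_nonneg_right (sq_nonneg x))

lemma abs_le_jb (x : ℝ) : |x| ≤ jb x :=
  Real.abs_le_sqrt (le_add_of_nonneg_left zero_le_one)

lemma jb_le_jb {x y : ℝ} (h : |x| ≤ |y|) : jb x ≤ jb y :=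
  Real.sqrt_le_sqrt (add_le_add_right (sq_le_sq.2 h) 1)

lemma jb_abs (x : ℝ) : jb |x| = jb x := by simp [jb]

lemma continuous_jb : Continuous jb := by unfold jb; fun_prop

noncomputable def singularWeight (α β x : ℝ) : ℝ := |x| ^ (-α) * jb x ^ (-β)

namespace singularWeight

variable {α β : ℝ}

lemma nonneg (x : ℝ) : 0 ≤ singularWeight α β x :=
  mul_nonneg (rpow_nonneg (abs_nonneg x) _) (rpow_nonneg (jb_pos x).le _)

lemma abs_eq (x : ℝ) : singularWeight α β |x| = singularWeight α β x := by
  simp [singularWeight, jb_abs]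

lemma measurable : Measurable (singularWeight α β) := by
  unfold singularWeight; have := continuous_jb.measurable; fun_prop

lemma le_rpow_neg (hβ : 0 ≤ β) (x : ℝ) : singularWeight α β x ≤ |x| ^ (-α) :=
  mul_le_of_le_one_right (rpow_nonneg (abs_nonneg x) _)
    (rpow_le_one_of_one_le_of_nonpos (one_le_jb x) (neg_nonpos.2 hβ))

lemma le_rpow_neg_add (hβ : 0 ≤ β) {x : ℝ} (hx : 0 < x) :
    singularWeight α β x ≤ x ^ (-(α + β)) := by
  rw [neg_add, rpow_add hx, singularWeight, abs_of_pos hx]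
  exact mul_le_mul_of_nonneg_left
    (rpow_le_rpow_of_nonpos hx ((le_abs_self x).trans (abs_le_jb x)) (neg_nonpos.2 hβ))
    (rpow_nonneg hx.le _)

lemma integrableOn_Ioi (hα : α < 1) (hβ : 0 ≤ β) (hαβ : 1 < α + β) :
    IntegrableOn (singularWeight α β) (Ioi 0) := by
  rw [← Ioc_union_Ioi_eq_Ioi zero_le_one, integrableOn_union]
  constructor
  · have hpow : IntegrableOn (fun x : ℝ ↦ x ^ (-α)) (Ioc 0 1) := by
      rw [← intervalIntegrable_iff_integrableOn_Ioc_of_le zero_le_one]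
      exact intervalIntegral.intervalIntegrable_rpow' (by linarith)
    refine hpow.mono' measurable.aestronglyMeasurable ?_
    filter_upwards [ae_restrict_mem measurableSet_Ioc] with x hx
    have h := le_rpow_neg (α := α) hβ x
    rwa [abs_of_pos hx.1, ← Real.norm_of_nonneg (nonneg x)] at h
  · have hpow : IntegrableOn (fun x : ℝ ↦ x ^ (-(α + β))) (Ioi 1) :=
      (integrableOn_Ioi_rpow_iff zero_lt_one).2 (by linarith)
    refine hpow.mono' measurable.aestronglyMeasurable ?_
    filter_upwards [ae_restrict_mem measurableSet_Ioi] with x hx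
    rw [Real.norm_of_nonneg (nonneg x)]
    exact le_rpow_neg_add hβ (zero_lt_one.trans hx)

lemma integrable (hα : α < 1) (hβ : 0 ≤ β) (hαβ : 1 < α + β) :
    Integrable (singularWeight α β) := by
  have h := (integrable_fun_norm_addHaar (volume : Measure ℝ) (f := singularWeight α β)).2
  simp only [Module.finrank_self, Nat.sub_self, pow_zero, one_smul, Real.norm_eq_abs, abs_eq] at h
  exact h (integrableOn_Ioi hα hβ hαβ)

lemma abs_rpow_mul_jb_rpow_le_add (hα : 0 ≤ α) (hβ : 0 ≤ β) (x : ℝ) {y : ℝ} (hy : y ≠ 0) :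
    |x| ^ (-α) * jb y ^ (-β) ≤ singularWeight α β x + singularWeight α β y := by
  rcases le_total |x| |y| with hxy | hyx
  · refine le_add_of_le_of_nonneg (mul_le_mul_of_nonneg_left ?_ ?_) (nonneg y)
    · exact rpow_le_rpow_of_nonpos (jb_pos x) (jb_le_jb hxy) (neg_nonpos.2 hβ)
    · exact rpow_nonneg (abs_nonneg x) _
  · refine le_add_of_nonneg_of_le (nonneg x) (mul_le_mul_of_nonneg_right ?_ ?_)
    · exact rpow_le_rpow_of_nonpos (abs_pos.2 hy) hyx (neg_nonpos.2 hα)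
    · exact rpow_nonneg (jb_pos y).le _

end singularWeight

/-- `sup_{a ∈ ℝ} ∫_ℝ |ξ|^{-α} ⟨ξ + a⟩^{-β} dξ < ∞`
for `0 ≤ α < β ≤ 1` with `α + β > 1`. -/
theorem stmt6 (α β : ℝ) (hα : 0 ≤ α) (hαβ : α < β) (hβ : β ≤ 1) (hsum : 1 < α + β) :
    ∃ C : ℝ≥0∞, C ≠ ⊤ ∧ ∀ a : ℝ,
      (∫⁻ ξ : ℝ, ENNReal.ofReal (|ξ| ^ (-α) * (jb (ξ + a)) ^ (-β))) ≤ C := by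
  have hβ0 : 0 ≤ β := hα.trans hαβ.le
  set I := ∫⁻ x, ENNReal.ofReal (singularWeight α β x)
  have hI : I ≠ ⊤ := (singularWeight.integrable (hαβ.trans_le hβ) hβ0 hsum).lintegral_lt_top.ne
  refine ⟨I + I, ENNReal.add_ne_top.2 ⟨hI, hI⟩, fun a ↦ ?_⟩
  calc ∫⁻ ξ, ENNReal.ofReal (|ξ| ^ (-α) * jb (ξ + a) ^ (-β))
      ≤ ∫⁻ ξ, (ENNReal.ofReal (singularWeight α β ξ) +
          ENNReal.ofReal (singularWeight α β (ξ + a))) := by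
        refine lintegral_mono_ae ?_
        filter_upwards [Measure.ae_ne volume (-a)] with ξ hξ
        rw [← ENNReal.ofReal_add (singularWeight.nonneg _) (singularWeight.nonneg _)]
        exact ENNReal.ofReal_le_ofReal <| singularWeight.abs_rpow_mul_jb_rpow_le_add hα hβ0 ξ
          (fun h ↦ hξ (eq_neg_of_add_eq_zero_left h))
    _ = I + I := by
        rw [lintegral_add_left singularWeight.measurable.ennreal_ofReal,
          lintegral_add_right_eq_self (fun x ↦ ENNReal.ofReal (singularWeight α β x)) a]
end

section
/- Let Ψ solve (i∂_t − Δ)Ψ = Ḃ with Ψ(0,·)=0 on ℝ × 𝕋, where Ḃ is a Gaussian noise white in space and fractional in time with Hurst index H ∈ (3/4, 1), represented as Ḃ(t,x) = ∑_{k∈ℤ} β̇^{(k)}_t e^{-ikx} with independent fractional noises β̇^{(k)} of covariance E[β̇_s β̇_t] = |t-s|^{2H-2}. Then for every T > 0, E[‖Ψ‖²_{L²([0,T]×𝕋)}] < ∞; in particular Ψ ∈ L²([0,T]×𝕋) almost surely. -/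
/-!
Mode by mode, `E|Ψ_k(t)|²` is a double integral over `[0,t]²` whose inner integral, after the
substitution `u = s - s'`, is a sum of two values of `G(r) = ∫₀^r cos(k²u) |u|^(2H-2) du`.
Splitting `G` at `u = k⁻²`, the singular part near `0` is at most `(k⁻²)^(2H-1) / (2H-1)`; beyond it
`u^(2H-2)` is decreasing, and integrating the oscillation `cos(k²u)` by parts gives `O(k^(2-4H))`
as well. So the `k`-th mode contributes `O(|k|^(2-4H))`, which is summable over `ℤ` since `H > 3/4`.
-/

open MeasureTheory Real ENNReal intervalIntegral Set

section
variable {p : ℝ}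

lemma intervalIntegrable_abs_rpow (hp : -1 < p) (a b : ℝ) :
    IntervalIntegrable (fun u : ℝ => |u| ^ p) volume a b := by
  have h_nonneg (c : ℝ) (hc : 0 ≤ c) :
      IntervalIntegrable (fun u : ℝ => |u| ^ p) volume 0 c :=
    (intervalIntegrable_rpow' hp).congr fun u hu => by
      rw [uIoc_of_le hc] at hu
      simp only [abs_of_pos hu.1]
  have h_zero (c : ℝ) : IntervalIntegrable (fun u : ℝ => |u| ^ p) volume 0 c := by
    rcases le_total 0 c with hc | hc
    · exact h_nonneg c hc
    · rw [IntervalIntegrable.iff_comp_neg]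
      simpa using h_nonneg (-c) (neg_nonneg.2 hc)
  exact (h_zero a).symm.trans (h_zero b)

lemma intervalIntegrable_cos_mul_abs_rpow (l : ℝ) (hp : -1 < p) (a b : ℝ) :
    IntervalIntegrable (fun u : ℝ => cos (l * u) * |u| ^ p) volume a b :=
  (intervalIntegrable_abs_rpow hp a b).continuousOn_mul (by fun_prop)

lemma integral_abs_rpow (hp : -1 < p) {r : ℝ} (hr : 0 ≤ r) :
    ∫ u in (0 : ℝ)..r, |u| ^ p = r ^ (p + 1) / (p + 1) := by
  rw [integral_congr (g := fun u => u ^ p) fun u hu => by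
      rw [uIcc_of_le hr] at hu
      simp only [abs_of_nonneg hu.1],
    integral_rpow (Or.inl hp), zero_rpow (by linarith), sub_zero]

lemma abs_integral_cos_mul_abs_rpow_le (l : ℝ) (hp : -1 < p) {r : ℝ} (hr : 0 ≤ r) :
    |∫ u in (0 : ℝ)..r, cos (l * u) * |u| ^ p| ≤ r ^ (p + 1) / (p + 1) := by
  rw [← integral_abs_rpow hp hr, ← Real.norm_eq_abs]
  refine norm_integral_le_of_norm_le hr (Filter.Eventually.of_forall fun u _ => ?_)
    (intervalIntegrable_abs_rpow hp 0 r)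
  rw [norm_mul, Real.norm_of_nonneg (rpow_nonneg (abs_nonneg u) p)]
  exact mul_le_of_le_one_left (rpow_nonneg (abs_nonneg u) p) (abs_cos_le_one _)

lemma abs_integral_cos_mul_rpow_le (hp : p ≤ 0) {l a r : ℝ} (hl : 0 < l) (ha : 0 < a)
    (har : a ≤ r) :
    |∫ u in a..r, cos (l * u) * u ^ p| ≤ 2 * a ^ p / l := by
  have hpos : ∀ x ∈ uIcc a r, 0 < x := fun x hx => ha.trans_le (uIcc_of_le har ▸ hx).1
  have hu (x) (hx : x ∈ uIcc a r) : HasDerivAt (fun x : ℝ => x ^ p) (p * x ^ (p - 1)) x :=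
    hasDerivAt_rpow_const (Or.inl (hpos x hx).ne')
  have hv (x) (_ : x ∈ uIcc a r) : HasDerivAt (fun x : ℝ => sin (l * x) / l) (cos (l * x)) x := by
    simpa [hl.ne'] using (((hasDerivAt_id x).const_mul l).sin).div_const l
  have hu' : IntervalIntegrable (fun x : ℝ => p * x ^ (p - 1)) volume a r :=
    (continuousOn_const.mul fun x hx =>
      (continuousAt_rpow_const x _ (Or.inl (hpos x hx).ne')).continuousWithinAt).intervalIntegrable
  have hsin (x : ℝ) (hx : 0 ≤ x) : |x ^ p * (sin (l * x) / l)| ≤ x ^ p / l := by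
    rw [abs_mul, abs_div, abs_of_pos hl, abs_of_nonneg (rpow_nonneg hx p), ← mul_one_div (x ^ p)]
    gcongr
    exact abs_sin_le_one _
  have hcorr : |∫ x in a..r, p * x ^ (p - 1) * (sin (l * x) / l)| ≤ (a ^ p - r ^ p) / l := by
    have hFTC : ∫ x in a..r, p * x ^ (p - 1) = r ^ p - a ^ p :=
      integral_eq_sub_of_hasDerivAt hu hu'
    calc |∫ x in a..r, p * x ^ (p - 1) * (sin (l * x) / l)|
        ≤ ∫ x in a..r, -(p * x ^ (p - 1)) / l := by
          rw [← Real.norm_eq_abs]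
          refine norm_integral_le_of_norm_le har (Filter.Eventually.of_forall fun x hx => ?_)
            (hu'.neg.div_const l)
          have hx0 : 0 < x := ha.trans hx.1
          rw [norm_mul, Real.norm_of_nonpos (mul_nonpos_of_nonpos_of_nonneg hp
            (rpow_nonneg hx0.le _)), Real.norm_eq_abs, abs_div, abs_of_pos hl,
            ← mul_one_div (-(p * x ^ (p - 1)))]
          gcongr
          · nlinarith [rpow_nonneg hx0.le (p - 1)]
          · exact abs_sin_le_one _
      _ = (a ^ p - r ^ p) / l := by
          rw [intervalIntegral.integral_div, intervalIntegral.integral_neg, hFTC, neg_sub]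
  rw [integral_congr fun x _ => mul_comm (cos (l * x)) (x ^ p),
    intervalIntegral.integral_mul_deriv_eq_deriv_mul hu hv hu'
      ((by fun_prop : Continuous fun x => cos (l * x)).intervalIntegrable a r)]
  calc _ ≤ |r ^ p * (sin (l * r) / l)| + |a ^ p * (sin (l * a) / l)|
        + |∫ x in a..r, p * x ^ (p - 1) * (sin (l * x) / l)| :=
        (abs_sub _ _).trans (add_le_add_left (abs_sub _ _) _)
    _ ≤ r ^ p / l + a ^ p / l + (a ^ p - r ^ p) / l :=
        add_le_add (add_le_add (hsin r (ha.le.trans har)) (hsin a ha.le)) hcorr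
    _ = 2 * a ^ p / l := by ring

lemma abs_integral_cos_mul_abs_rpow_le_rpow_neg (hp : -1 < p) (hp0 : p ≤ 0) {l r : ℝ}
    (hl : 0 < l) (hr : 0 ≤ r) :
    |∫ u in (0 : ℝ)..r, cos (l * u) * |u| ^ p| ≤ (1 / (p + 1) + 2) * l ^ (-(p + 1)) := by
  set a := l⁻¹
  have ha : 0 < a := inv_pos.2 hl
  have hq : 0 < p + 1 := by linarith
  have ha_rpow : a ^ (p + 1) = l ^ (-(p + 1)) := by rw [inv_rpow hl.le, rpow_neg hl.le]
  have ha_div : a ^ p / l = l ^ (-(p + 1)) := by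
    rw [inv_rpow hl.le, rpow_neg hl.le, rpow_add_one hl.ne', mul_inv, div_eq_mul_inv]
  have h_head : ∀ r ∈ Icc 0 a, |∫ u in (0 : ℝ)..r, cos (l * u) * |u| ^ p|
      ≤ l ^ (-(p + 1)) / (p + 1) := fun r hr => by
    rw [← ha_rpow]
    exact (abs_integral_cos_mul_abs_rpow_le l hp hr.1).trans
      (div_le_div_of_nonneg_right (rpow_le_rpow hr.1 hr.2 hq.le) hq.le)
  have h_nonneg : 0 ≤ l ^ (-(p + 1)) := rpow_nonneg hl.le _
  rcases le_or_gt r a with hra | har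
  · calc _ ≤ l ^ (-(p + 1)) / (p + 1) := h_head r ⟨hr, hra⟩
      _ ≤ _ := by rw [div_eq_mul_one_div, mul_comm]; nlinarith
  have h_tail : |∫ u in a..r, cos (l * u) * |u| ^ p| ≤ 2 * l ^ (-(p + 1)) := by
    rw [integral_congr (g := fun u => cos (l * u) * u ^ p) fun u hu => by
      rw [uIcc_of_le har.le] at hu
      simp only [abs_of_pos (ha.trans_le hu.1)]]
    calc _ ≤ 2 * a ^ p / l := abs_integral_cos_mul_rpow_le hp0 hl ha har.le
      _ = _ := by rw [mul_div_assoc, ha_div]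
  rw [← integral_add_adjacent_intervals (intervalIntegrable_cos_mul_abs_rpow l hp 0 a)
    (intervalIntegrable_cos_mul_abs_rpow l hp a r)]
  calc _ ≤ _ := abs_add_le _ _
    _ ≤ l ^ (-(p + 1)) / (p + 1) + 2 * l ^ (-(p + 1)) :=
        add_le_add (h_head a ⟨ha.le, le_rfl⟩) h_tail
    _ = _ := by ring

lemma integral_cos_mul_abs_rpow_sub (l : ℝ) (hp : -1 < p) (s t : ℝ) :
    ∫ s' in (0 : ℝ)..t, cos (l * (s - s')) * |s - s'| ^ p
      = (∫ u in (0 : ℝ)..s, cos (l * u) * |u| ^ p)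
        + ∫ u in (0 : ℝ)..(t - s), cos (l * u) * |u| ^ p := by
  set g : ℝ → ℝ := fun u => cos (l * u) * |u| ^ p
  have h_even : ∫ u in (s - t)..0, g u = ∫ u in (0 : ℝ)..(t - s), g u := by
    simpa [g, neg_sub] using (integral_comp_neg (a := 0) (b := t - s) g).symm
  rw [show (∫ s' in (0 : ℝ)..t, g (s - s')) = ∫ u in (s - t)..s, g u by
      simp [integral_comp_sub_left g s],
    ← integral_add_adjacent_intervals (intervalIntegrable_cos_mul_abs_rpow l hp (s - t) 0)
      (intervalIntegrable_cos_mul_abs_rpow l hp 0 s), h_even, add_comm]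

lemma integral_integral_cos_mul_abs_rpow_le (hp : -1 < p) {l t T M : ℝ} (ht : t ∈ Icc 0 T)
    (hM : ∀ r ∈ Icc 0 T, |∫ u in (0 : ℝ)..r, cos (l * u) * |u| ^ p| ≤ M) :
    ∫ s in (0 : ℝ)..t, ∫ s' in (0 : ℝ)..t, cos (l * (s - s')) * |s - s'| ^ p ≤ 2 * M * T := by
  have hM0 : 0 ≤ M := by simpa using hM 0 ⟨le_rfl, ht.1.trans ht.2⟩
  have h_inner : ∀ s ∈ uIoc 0 t,
      ‖∫ s' in (0 : ℝ)..t, cos (l * (s - s')) * |s - s'| ^ p‖ ≤ 2 * M := fun s hs => by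
    rw [uIoc_of_le ht.1] at hs
    rw [integral_cos_mul_abs_rpow_sub l hp, Real.norm_eq_abs, two_mul]
    exact (abs_add_le _ _).trans (add_le_add (hM s ⟨hs.1.le, hs.2.trans ht.2⟩)
      (hM (t - s) ⟨by linarith [hs.2], by linarith [hs.1, ht.2]⟩))
  calc _ ≤ ‖∫ s in (0 : ℝ)..t, ∫ s' in (0 : ℝ)..t, cos (l * (s - s')) * |s - s'| ^ p‖ :=
        le_abs_self _
    _ ≤ 2 * M * |t - 0| := norm_integral_le_of_norm_le_const h_inner
    _ ≤ 2 * M * T := by rw [sub_zero, abs_of_nonneg ht.1]; gcongr; exact ht.2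

end

lemma tsum_int_ne_top_of_le_abs_rpow {f : ℤ → ℝ≥0∞} {q C : ℝ} (hq : 1 < q) (h0 : f 0 ≠ ⊤)
    (hf : ∀ k ≠ 0, f k ≤ ENNReal.ofReal (C * |(k : ℝ)| ^ (-q))) :
    ∑' k, f k ≠ ⊤ := by
  rw [ENNReal.tsum_eq_add_tsum_ite 0]
  refine add_ne_top.2 ⟨h0, ne_top_of_le_ne_top (b := ENNReal.ofReal C *
    ENNReal.ofReal (∑' k : ℤ, |(k : ℝ)| ^ (-q))) (mul_ne_top ofReal_ne_top ofReal_ne_top) ?_⟩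
  rw [ENNReal.ofReal_tsum_of_nonneg (fun k => rpow_nonneg (abs_nonneg _) _)
    (summable_abs_int_rpow hq), ← ENNReal.tsum_mul_left]
  refine ENNReal.tsum_le_tsum fun k => ?_
  split_ifs with hk
  · exact bot_le
  · exact (hf k hk).trans_eq (ofReal_mul' (rpow_nonneg (abs_nonneg _) _))

theorem stmt11_general {Ω : Type*} [MeasurableSpace Ω] (P : Measure Ω)
    (H T : ℝ) (hH1 : 3/4 < H) (hH2 : H < 1) (hT : 0 < T)
    (Ψ : ℤ → Ω → ℝ → ℂ)
    (hcov : ∀ k : ℤ, ∀ t ∈ Set.Icc (0 : ℝ) T,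
      (∫⁻ ω, ((‖Ψ k ω t‖₊ : ℝ≥0∞)) ^ 2 ∂P)
        = ENNReal.ofReal (∫ s in (0 : ℝ)..t, ∫ s' in (0 : ℝ)..t,
            Real.cos ((k : ℝ) ^ 2 * (s - s')) * |s - s'| ^ (2 * H - 2))) :
    (∑' k : ℤ, ∫⁻ t in Set.Ioc (0 : ℝ) T, ∫⁻ ω, ((‖Ψ k ω t‖₊ : ℝ≥0∞)) ^ 2 ∂P) ≠ ⊤ := by
  set p := 2 * H - 2
  have hp : -1 < p := by linarith
  have hp0 : p ≤ 0 := by linarith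
  have h_mode (k : ℤ) (M : ℝ)
      (hM : ∀ r ∈ Icc 0 T, |∫ u in (0 : ℝ)..r, cos ((k : ℝ) ^ 2 * u) * |u| ^ p| ≤ M) :
      ∫⁻ t in Ioc 0 T, ∫⁻ ω, (‖Ψ k ω t‖₊ : ℝ≥0∞) ^ 2 ∂P ≤ ENNReal.ofReal (2 * M * T * T) := by
    calc _ = ∫⁻ t in Ioc 0 T, ENNReal.ofReal (∫ s in (0 : ℝ)..t, ∫ s' in (0 : ℝ)..t,
            cos ((k : ℝ) ^ 2 * (s - s')) * |s - s'| ^ p) :=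
          setLIntegral_congr_fun measurableSet_Ioc fun t ht => hcov k t (Ioc_subset_Icc_self ht)
      _ ≤ ∫⁻ _ in Ioc 0 T, ENNReal.ofReal (2 * M * T) :=
          setLIntegral_mono' measurableSet_Ioc fun t ht => ofReal_le_ofReal <|
            integral_integral_cos_mul_abs_rpow_le hp (Ioc_subset_Icc_self ht) hM
      _ = _ := by rw [setLIntegral_const, Real.volume_Ioc, sub_zero, ← ofReal_mul' hT.le]
  refine tsum_int_ne_top_of_le_abs_rpow (q := 2 * (p + 1))
    (C := 2 * (1 / (p + 1) + 2) * T * T) (by linarith) ?_ fun k hk => ?_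
  · refine ne_top_of_le_ne_top ofReal_ne_top (h_mode 0 (T ^ (p + 1) / (p + 1)) fun r hr => ?_)
    exact (abs_integral_cos_mul_abs_rpow_le _ hp hr.1).trans
      (div_le_div_of_nonneg_right (rpow_le_rpow hr.1 hr.2 (by linarith)) (by linarith))
  · have h_sq : ((k : ℝ) ^ 2) ^ (-(p + 1)) = |(k : ℝ)| ^ (-(2 * (p + 1))) := by
      rw [← sq_abs, ← Real.rpow_natCast, ← rpow_mul (abs_nonneg _), Nat.cast_ofNat, mul_neg]
    convert h_mode k _ fun r hr =>
      abs_integral_cos_mul_abs_rpow_le_rpow_neg hp hp0 (by positivity) hr.1 using 2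
    rw [h_sq]
    ring

/-- if `H ∈ (3/4, 1)` and the Fourier modes `Ψ_k` of the mild solution of
`(i∂_t - Δ)Ψ = Ḃ`, `Ψ(0,·) = 0`, have the covariance
`E[|Ψ_k(t)|²] = ∫_0^t ∫_0^t cos(k²(s-s')) |s-s'|^{2H-2} ds ds'`
(derived from the white-in-space, `H`-fractional-in-time noise), then
`E[‖Ψ‖²_{L²([0,T]×𝕋)}] = ∑_k ∫_0^T E[|Ψ_k(t)|²] dt < ∞`. -/
theorem stmt11 {Ω : Type*} [MeasurableSpace Ω] (P : Measure Ω) [IsProbabilityMeasure P]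
    (H T : ℝ) (hH1 : 3/4 < H) (hH2 : H < 1) (hT : 0 < T)
    (Ψ : ℤ → Ω → ℝ → ℂ)
    (hcov : ∀ k : ℤ, ∀ t ∈ Set.Icc (0 : ℝ) T,
      (∫⁻ ω, ((‖Ψ k ω t‖₊ : ℝ≥0∞)) ^ 2 ∂P)
        = ENNReal.ofReal (∫ s in (0 : ℝ)..t, ∫ s' in (0 : ℝ)..t,
            Real.cos ((k : ℝ) ^ 2 * (s - s')) * |s - s'| ^ (2 * H - 2))) :
    (∑' k : ℤ, ∫⁻ t in Set.Ioc (0 : ℝ) T, ∫⁻ ω, ((‖Ψ k ω t‖₊ : ℝ≥0∞)) ^ 2 ∂P) ≠ ⊤ :=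
  stmt11_general P H T hH1 hH2 hT Ψ hcov
end
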